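/- Let G ≤ Aut(T) be a group with the subgroup induction property such that the rigid stabilizer Rist_G(v) is infinite for every vertex v of T. Then G is a torsion group. -/

import Mathlib

/-- Vertices of the rooted regular tree over alphabet `A`: finite words in `A`. -/
abbrev Vert (A : Type*) := List A

/-- The automorphism group of the rooted regular tree with vertex set `Vert A`:
length-preserving permutations of the vertices that preserve the prefix order. -/
def treeAut (A : Type*) : Subgroup (Equiv.Perm (Vert A)) where
  carrier := { g | (∀ v : Vert A, (g v).length = v.length) ∧
    ∀ v w : Vert A, v <+: w ↔ g v <+: g w }
  one_mem' := ⟨fun _ => rfl, fun _ _ => Iff.rfl⟩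
  mul_mem' := by
    rintro g h ⟨hg1, hg2⟩ ⟨hh1, hh2⟩
    refine ⟨fun v => ?_, fun v w => ?_⟩
    · simp only [Equiv.Perm.mul_apply, hg1, hh1]
    · simpa only [Equiv.Perm.mul_apply] using (hh2 v w).trans (hg2 (h v) (h w))
  inv_mem' := by
    rintro g ⟨hg1, hg2⟩
    refine ⟨fun v => ?_, fun v w => ?_⟩
    · have h1 := hg1 (g⁻¹ v)
      simp only [Equiv.Perm.coe_inv, Equiv.apply_symm_apply] at h1
      exact h1.symm
    · have h2 := hg2 (g⁻¹ v) (g⁻¹ w)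
      simp only [Equiv.Perm.coe_inv, Equiv.apply_symm_apply] at h2
      exact h2.symm

open scoped Classical in
/-- The section `φ_v(g)` of an automorphism `g` at the vertex `v`: the unique
permutation `s` with `g (v ++ w) = g v ++ s w` for all `w` (it exists and is unique
whenever `g` is a tree automorphism). -/
noncomputable def sect {A : Type*} (g : Equiv.Perm (Vert A)) (v : Vert A) :
    Equiv.Perm (Vert A) :=
  if h : ∃ s : Equiv.Perm (Vert A), ∀ w : Vert A, g (v ++ w) = g v ++ s w then h.choose else 1

/-- The `n`-th level of the tree: words of length `n`. -/
def level (A : Type*) (n : ℕ) : Set (Vert A) := { v | v.length = n }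

/-- The pointwise stabilizer in `G` of a set `S` of vertices. -/
def stabSet {A : Type*} (G : Subgroup (Equiv.Perm (Vert A))) (S : Set (Vert A)) :
    Subgroup (Equiv.Perm (Vert A)) where
  carrier := { g | g ∈ G ∧ ∀ v ∈ S, g v = v }
  one_mem' := ⟨G.one_mem, fun _ _ => rfl⟩
  mul_mem' := by
    rintro g h ⟨hg, hg2⟩ ⟨hh, hh2⟩
    exact ⟨G.mul_mem hg hh, fun v hv => by
      simp only [Equiv.Perm.mul_apply, hh2 v hv, hg2 v hv]⟩
  inv_mem' := by
    rintro g ⟨hg, hg2⟩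
    refine ⟨G.inv_mem hg, fun v hv => ?_⟩
    conv_lhs => rw [← hg2 v hv]
    exact g.symm_apply_apply v

/-- The stabilizer in `G` of a single vertex `v`. -/
def vstab {A : Type*} (G : Subgroup (Equiv.Perm (Vert A))) (v : Vert A) :
    Subgroup (Equiv.Perm (Vert A)) := stabSet G {v}

/-- The pointwise stabilizer in `G` of the `n`-th level. -/
def lstab {A : Type*} (G : Subgroup (Equiv.Perm (Vert A))) (n : ℕ) :
    Subgroup (Equiv.Perm (Vert A)) := stabSet G (level A n)

/-- The rigid stabilizer of a vertex `v` in `G`: elements of `G` acting trivially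
outside the subtree rooted at `v`. -/
def rist {A : Type*} (G : Subgroup (Equiv.Perm (Vert A))) (v : Vert A) :
    Subgroup (Equiv.Perm (Vert A)) where
  carrier := { g | g ∈ G ∧ ∀ w : Vert A, ¬ v <+: w → g w = w }
  one_mem' := ⟨G.one_mem, fun _ _ => rfl⟩
  mul_mem' := by
    rintro g h ⟨hg, hg2⟩ ⟨hh, hh2⟩
    exact ⟨G.mul_mem hg hh, fun w hw => by
      simp only [Equiv.Perm.mul_apply, hh2 w hw, hg2 w hw]⟩
  inv_mem' := by
    rintro g ⟨hg, hg2⟩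
    refine ⟨G.inv_mem hg, fun w hw => ?_⟩
    conv_lhs => rw [← hg2 w hw]
    exact g.symm_apply_apply w

/-- The rigid stabilizer of the `n`-th level: the subgroup generated by the rigid
stabilizers of the vertices of level `n`. -/
def ristLevel {A : Type*} (G : Subgroup (Equiv.Perm (Vert A))) (n : ℕ) :
    Subgroup (Equiv.Perm (Vert A)) := ⨆ v ∈ level A n, rist G v

/-- The subgroup `φ_v(H)` generated by (equivalently, consisting of, when `H`
stabilizes `v`) the sections at `v` of the elements of `H`. -/
def sectGrp {A : Type*} (H : Subgroup (Equiv.Perm (Vert A))) (v : Vert A) :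
    Subgroup (Equiv.Perm (Vert A)) :=
  Subgroup.closure ((fun g => sect g v) '' (H : Set (Equiv.Perm (Vert A))))

/-- A transversal of the tree: a finite set of vertices met exactly once by every
infinite ray from the root. -/
def IsTransversal (A : Type*) (X : Set (Vert A)) : Prop :=
  X.Finite ∧ ∀ ω : ℕ → A, ∃! n : ℕ, (List.ofFn fun i : Fin n => ω i.val) ∈ X

/-- The subgroup induction property. -/
def HasSGIP {A : Type*} (G : Subgroup (Equiv.Perm (Vert A))) : Prop :=
  ∀ H : Subgroup (Equiv.Perm (Vert A)), H ≤ G → H.FG →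
    ∃ X : Set (Vert A), IsTransversal A X ∧ ∀ v ∈ X,
      sectGrp (stabSet H X) v = ⊥ ∨
      (sectGrp (stabSet H X) v).relIndex (sectGrp (vstab G v) v) ≠ 0

/-- `G` acts transitively on every level of the tree. -/
def LevelTransitive {A : Type*} (G : Subgroup (Equiv.Perm (Vert A))) : Prop :=
  ∀ v w : Vert A, v.length = w.length → ∃ g ∈ G, g v = w

/-- Weakly branch: level-transitive with all rigid vertex stabilizers infinite. -/
def IsWeaklyBranch {A : Type*} (G : Subgroup (Equiv.Perm (Vert A))) : Prop :=
  LevelTransitive G ∧ ∀ v : Vert A, (rist G v : Set (Equiv.Perm (Vert A))).Infinite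

/-- Branch: weakly branch and every level rigid stabilizer has finite index in `G`. -/
def IsBranch {A : Type*} (G : Subgroup (Equiv.Perm (Vert A))) : Prop :=
  IsWeaklyBranch G ∧ ∀ n : ℕ, (ristLevel G n).relIndex G ≠ 0

/-- Self-similar: all sections of vertex stabilizers land in `G`. -/
def SelfSimilar {A : Type*} (G : Subgroup (Equiv.Perm (Vert A))) : Prop :=
  ∀ v : Vert A, sectGrp (vstab G v) v ≤ G

/-- Self-replicating: `φ_v(Stab_G(v)) = G` for every vertex `v`. -/
def SelfReplicating {A : Type*} (G : Subgroup (Equiv.Perm (Vert A))) : Prop :=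
  ∀ v : Vert A, sectGrp (vstab G v) v = G

/-- Strongly self-replicating: self-similar and `φ_v(Stab_G(L_n)) = G` for every `n`
and every vertex `v` of level `n`. -/
def StronglySelfReplicating {A : Type*} (G : Subgroup (Equiv.Perm (Vert A))) : Prop :=
  SelfSimilar G ∧ ∀ (n : ℕ) (v : Vert A), v.length = n → sectGrp (lstab G n) v = G

/-- The congruence subgroup property: every finite-index subgroup of `G` contains
some level stabilizer. -/
def HasCSP {A : Type*} (G : Subgroup (Equiv.Perm (Vert A))) : Prop :=
  ∀ K : Subgroup (Equiv.Perm (Vert A)), K ≤ G → K.relIndex G ≠ 0 →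
    ∃ n : ℕ, lstab G n ≤ K

/-- A group is just infinite if it is infinite and all its proper quotients are
finite, i.e. every nontrivial normal subgroup has finite index. -/
def JustInfinite (G : Type*) [Group G] : Prop :=
  Infinite G ∧ ∀ N : Subgroup G, N.Normal → N ≠ ⊥ → N.index ≠ 0

/-- `Φ_F(G)`: the intersection of all maximal subgroups of finite index of `G`. -/
def PhiF (G : Type*) [Group G] : Subgroup G :=
  ⨅ M ∈ { M : Subgroup G | IsCoatom M ∧ M.index ≠ 0 }, M

/-- Two groups are commensurable if they have isomorphic finite-index subgroups. -/
def CommGroups (G₁ : Type*) (G₂ : Type*) [Group G₁] [Group G₂] : Prop :=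
  ∃ (H₁ : Subgroup G₁) (H₂ : Subgroup G₂),
    H₁.index ≠ 0 ∧ H₂.index ≠ 0 ∧ Nonempty (H₁ ≃* H₂)

/-!
Let `g ∈ G` and let `X` be the transversal that the subgroup induction property gives for
`⟨g⟩`. At `v ∈ X` the group `φ_v(Stab_⟨g⟩(X))` is cyclic, while `φ_v(Stab_G(v))` contains
the two infinite groups `φ_v(Rist_G(v0))` and `φ_v(Rist_G(v1))`, which meet trivially since
they are supported on disjoint subtrees. A cyclic group `⟨z⟩` of finite index would meet both
of them nontrivially, say in `z^p` and `z^q`; then `z^(pq) = 1` and `⟨z⟩` would be finite. So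
all sections of `Stab_⟨g⟩(X)` at `X` are trivial. A power `g^k` fixing `X` then acts trivially
below `X`, so it only moves the finitely many vertices above `X` and has finite order.
-/

open Subgroup

section GroupTheory

variable {M : Type*} [Group M]

theorem Subgroup.infinite_inf_of_relIndex_ne_zero {C B : Subgroup M}
    (hB : (B : Set M).Infinite) (h : C.relIndex B ≠ 0) :
    ((C ⊓ B : Subgroup M) : Set M).Infinite := by
  intro hfin
  have : Finite (C ⊓ B : Subgroup M) := hfin.to_subtype
  have : Infinite B := hB.to_subtype
  have hmul := relIndex_mul_relIndex (H := ⊥) (K := C ⊓ B) (L := B) bot_le inf_le_right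
  rw [relIndex_bot_left, relIndex_bot_left, inf_relIndex_right,
    Nat.card_eq_zero_of_infinite (α := B)] at hmul
  exact mul_ne_zero Nat.card_pos.ne' h hmul

theorem isOfFinOrder_of_zpowers_inf_ne_bot {z : M} {A B : Subgroup M} (hAB : A ⊓ B = ⊥)
    (hA : zpowers z ⊓ A ≠ ⊥) (hB : zpowers z ⊓ B ≠ ⊥) : IsOfFinOrder z := by
  obtain ⟨a, ha, ha1⟩ := (zpowers z ⊓ A).bot_or_exists_ne_one.resolve_left hA
  obtain ⟨b, hb, hb1⟩ := (zpowers z ⊓ B).bot_or_exists_ne_one.resolve_left hB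
  obtain ⟨p, rfl⟩ := mem_zpowers_iff.mp (mem_inf.mp ha).1
  obtain ⟨q, rfl⟩ := mem_zpowers_iff.mp (mem_inf.mp hb).1
  have hp : p ≠ 0 := by rintro rfl; exact ha1 (zpow_zero z)
  have hq : q ≠ 0 := by rintro rfl; exact hb1 (zpow_zero z)
  have hpq : z ^ (p * q) ∈ A ⊓ B := by
    refine mem_inf.mpr ⟨?_, ?_⟩
    · rw [zpow_mul]; exact A.zpow_mem (mem_inf.mp ha).2 q
    · rw [mul_comm, zpow_mul]; exact B.zpow_mem (mem_inf.mp hb).2 p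
  rw [hAB, mem_bot] at hpq
  exact isOfFinOrder_iff_zpow_eq_one.mpr ⟨p * q, mul_ne_zero hp hq, hpq⟩

theorem Subgroup.relIndex_zpowers_eq_zero {z : M} {A B D : Subgroup M}
    (hA : (A : Set M).Infinite) (hB : (B : Set M).Infinite) (hAD : A ≤ D) (hBD : B ≤ D)
    (hAB : A ⊓ B = ⊥) : (zpowers z).relIndex D = 0 := by
  by_contra h
  have hzA := infinite_inf_of_relIndex_ne_zero hA fun h0 => h (relIndex_eq_zero_of_le_right hAD h0)
  have hzB := infinite_inf_of_relIndex_ne_zero hB fun h0 => h (relIndex_eq_zero_of_le_right hBD h0)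
  have ne_bot : ∀ {K : Subgroup M}, (K : Set M).Infinite → K ≠ ⊥ := fun hK hbot =>
    hK (by rw [hbot, coe_bot]; exact Set.finite_singleton 1)
  exact infinite_zpowers.mp (hzA.mono inf_le_left)
    (isOfFinOrder_of_zpowers_inf_ne_bot hAB (ne_bot hzA) (ne_bot hzB))

end GroupTheory

namespace Equiv.Perm

variable {α : Type*}

theorem exists_pos_pow_eqOn_of_finite {g : Perm α} {S : Set α} (hS : S.Finite)
    (hgS : ∀ x, g x ∈ S ↔ x ∈ S) : ∃ k, 0 < k ∧ ∀ x ∈ S, (g ^ k) x = x := by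
  have := hS.to_subtype
  refine ⟨orderOf (g.subtypePerm hgS), orderOf_pos _, fun x hx => ?_⟩
  have h := congrArg (fun f : Perm S => (f ⟨x, hx⟩ : α))
    (pow_orderOf_eq_one (g.subtypePerm hgS))
  rwa [subtypePerm_pow] at h

theorem isOfFinOrder_of_forall_notMem_apply_eq_self {g : Perm α} {S : Set α} (hS : S.Finite)
    (hg : ∀ x ∉ S, g x = x) : IsOfFinOrder g := by
  have hgS : ∀ x, g x ∈ S ↔ x ∈ S := fun x => by
    refine ⟨fun hgx => by_contra fun hx => ?_, fun hx => by_contra fun hgx => ?_⟩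
    · exact hx (hg x hx ▸ hgx)
    · rw [g.injective (hg (g x) hgx)] at hgx
      exact hgx hx
  obtain ⟨k, hk, hkS⟩ := exists_pos_pow_eqOn_of_finite hS hgS
  refine isOfFinOrder_iff_pow_eq_one.mpr ⟨k, hk, Equiv.ext fun x => ?_⟩
  by_cases hx : x ∈ S
  · exact hkS x hx
  · exact pow_apply_eq_self_of_apply_eq_self (hg x hx) k

end Equiv.Perm

section Tree

variable {A : Type*}

theorem apply_append_eq_of_mem_treeAut {g : Equiv.Perm (Vert A)} (hg : g ∈ treeAut A)
    (v w : Vert A) : g (v ++ w) = g v ++ (g (v ++ w)).drop v.length := by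
  obtain ⟨t, ht⟩ := (hg.2 v (v ++ w)).1 (List.prefix_append v w)
  rw [← ht, List.drop_left' (hg.1 v)]

theorem exists_sect_of_mem_treeAut {g : Equiv.Perm (Vert A)} (hg : g ∈ treeAut A) (v : Vert A) :
    ∃ s : Equiv.Perm (Vert A), ∀ w : Vert A, g (v ++ w) = g v ++ s w := by
  have hinv : ∀ w, g⁻¹ (g v ++ w) = v ++ (g⁻¹ (g v ++ w)).drop v.length := fun w => by
    simpa [hg.1 v] using apply_append_eq_of_mem_treeAut ((treeAut A).inv_mem hg) (g v) w
  refine ⟨⟨fun w => (g (v ++ w)).drop v.length,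
    fun w => (g⁻¹ (g v ++ w)).drop v.length, fun w => ?_, fun w => ?_⟩,
    apply_append_eq_of_mem_treeAut hg v⟩
  · simp only
    rw [← apply_append_eq_of_mem_treeAut hg v w, Equiv.Perm.coe_inv, Equiv.symm_apply_apply,
      List.drop_left' rfl]
  · simp only
    rw [← hinv, Equiv.Perm.coe_inv, Equiv.apply_symm_apply, List.drop_left' (hg.1 v)]

theorem sect_spec {g : Equiv.Perm (Vert A)} (hg : g ∈ treeAut A) (v w : Vert A) :
    g (v ++ w) = g v ++ sect g v w := by
  rw [sect, dif_pos (exists_sect_of_mem_treeAut hg v)]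
  exact (exists_sect_of_mem_treeAut hg v).choose_spec w

theorem sect_mul {g h : Equiv.Perm (Vert A)} (hg : g ∈ treeAut A) (hh : h ∈ treeAut A)
    (v : Vert A) : sect (g * h) v = sect g (h v) * sect h v := by
  ext1 w
  apply List.append_cancel_left (as := (g * h) v)
  rw [← sect_spec ((treeAut A).mul_mem hg hh), Equiv.Perm.mul_apply, Equiv.Perm.mul_apply,
    Equiv.Perm.mul_apply, sect_spec hh, sect_spec hg]

noncomputable def sectHom (v : Vert A) : vstab (treeAut A) v →* Equiv.Perm (Vert A) :=
  MonoidHom.mk' (fun g => sect g v) fun g h => by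
    simp only [Subgroup.coe_mul]
    rw [sect_mul g.2.1 h.2.1, h.2.2 v rfl]

theorem sect_zpow {g : Equiv.Perm (Vert A)} (hg : g ∈ treeAut A) {v : Vert A} (hv : g v = v)
    (n : ℤ) : sect (g ^ n) v = sect g v ^ n :=
  map_zpow (sectHom v) ⟨g, hg, fun _ hu => hu ▸ hv⟩ n

theorem apply_eq_self_of_sect_eq_one {g : Equiv.Perm (Vert A)} (hg : g ∈ treeAut A)
    {u w : Vert A} (hu : g u = u) (hs : sect g u = 1) (huw : u <+: w) : g w = w := by
  obtain ⟨t, rfl⟩ := huw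
  rw [sect_spec hg, hu, hs]
  rfl

theorem sectGrp_mono {H K : Subgroup (Equiv.Perm (Vert A))} (h : H ≤ K) (v : Vert A) :
    sectGrp H v ≤ sectGrp K v :=
  closure_mono (Set.image_mono h)

theorem sect_mem_sectGrp {H : Subgroup (Equiv.Perm (Vert A))} {g : Equiv.Perm (Vert A)}
    (hg : g ∈ H) (v : Vert A) : sect g v ∈ sectGrp H v :=
  subset_closure ⟨g, hg, rfl⟩

theorem sectGrp_zpowers {g : Equiv.Perm (Vert A)} (hg : g ∈ treeAut A) {v : Vert A}
    (hv : g v = v) : sectGrp (zpowers g) v = zpowers (sect g v) := by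
  refine le_antisymm ((closure_le _).mpr ?_) (zpowers_le.mpr (sect_mem_sectGrp (mem_zpowers g) v))
  rintro _ ⟨_, ⟨n, rfl⟩, rfl⟩
  exact ⟨n, (sect_zpow hg hv n).symm⟩

theorem exists_sectGrp_stabSet_zpowers_eq {g : Equiv.Perm (Vert A)} (hg : g ∈ treeAut A)
    {X : Set (Vert A)} {v : Vert A} (hv : v ∈ X) :
    ∃ z, sectGrp (stabSet (zpowers g) X) v = zpowers z := by
  obtain ⟨n, hn⟩ := (le_zpowers_iff g (stabSet (zpowers g) X)).mp fun _ h => h.1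
  have hgn : g ^ n ∈ stabSet (zpowers g) X := by rw [hn]; exact mem_zpowers _
  exact ⟨_, hn ▸ sectGrp_zpowers ((treeAut A).pow_mem hg n) (hgn.2 v hv)⟩

theorem apply_eq_self_of_mem_rist_append_singleton {G : Subgroup (Equiv.Perm (Vert A))}
    {h : Equiv.Perm (Vert A)} {v : Vert A} {i : A} (hh : h ∈ rist G (v ++ [i])) : h v = v :=
  hh.2 v fun hp => by simpa using hp.length_le

theorem rist_append_singleton_le_vstab (G : Subgroup (Equiv.Perm (Vert A))) (v : Vert A)
    (i : A) : rist G (v ++ [i]) ≤ vstab G v := fun _ hh =>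
  ⟨hh.1, fun _ hu =>
    (Set.mem_singleton_iff.mp hu) ▸ apply_eq_self_of_mem_rist_append_singleton hh⟩

theorem sect_mem_rist_top_of_mem_rist_append_singleton {G : Subgroup (Equiv.Perm (Vert A))}
    (hG : G ≤ treeAut A) {h : Equiv.Perm (Vert A)} {v : Vert A} {i : A}
    (hh : h ∈ rist G (v ++ [i])) : sect h v ∈ rist ⊤ [i] := by
  refine ⟨trivial, fun w hw => List.append_cancel_left (as := v) ?_⟩
  calc v ++ sect h v w = h (v ++ w) := by
        rw [sect_spec (hG hh.1), apply_eq_self_of_mem_rist_append_singleton hh]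
    _ = v ++ w := hh.2 (v ++ w) fun ⟨t, ht⟩ =>
        hw ⟨t, List.append_cancel_left (by rwa [List.append_assoc] at ht)⟩

theorem sect_injOn_rist_append_singleton {G : Subgroup (Equiv.Perm (Vert A))}
    (hG : G ≤ treeAut A) (v : Vert A) (i : A) :
    Set.InjOn (fun g => sect g v) (rist G (v ++ [i])) := by
  intro h₁ hh₁ h₂ hh₂ hs
  ext1 u
  by_cases hvu : v <+: u
  · obtain ⟨w, rfl⟩ := hvu
    rw [sect_spec (hG hh₁.1), sect_spec (hG hh₂.1),
      apply_eq_self_of_mem_rist_append_singleton hh₁,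
      apply_eq_self_of_mem_rist_append_singleton hh₂]
    exact congrArg (v ++ ·) (congrFun (congrArg DFunLike.coe hs) w)
  · have hvu' : ¬ v ++ [i] <+: u := fun h => hvu ((List.prefix_append v [i]).trans h)
    rw [hh₁.2 u hvu', hh₂.2 u hvu']

theorem rist_top_inf_eq_bot {i j : A} (hij : i ≠ j) :
    rist (⊤ : Subgroup (Equiv.Perm (Vert A))) [i] ⊓ rist ⊤ [j] = ⊥ := by
  refine (eq_bot_iff_forall _).mpr fun s hs => Equiv.ext fun w => ?_
  by_cases hiw : [i] <+: w
  · refine hs.2.2 w fun hjw => hij ?_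
    obtain ⟨_, rfl⟩ := hiw
    simpa [eq_comm] using hjw
  · exact hs.1.2 w hiw

theorem sectGrp_rist_append_singleton_le {G : Subgroup (Equiv.Perm (Vert A))}
    (hG : G ≤ treeAut A) (v : Vert A) (i : A) : sectGrp (rist G (v ++ [i])) v ≤ rist ⊤ [i] :=
  (closure_le _).mpr fun _ ⟨_, hh, hs⟩ =>
    hs ▸ sect_mem_rist_top_of_mem_rist_append_singleton hG hh

theorem infinite_sectGrp_rist_append_singleton {G : Subgroup (Equiv.Perm (Vert A))}
    (hG : G ≤ treeAut A) {v : Vert A} {i : A}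
    (hinf : (rist G (v ++ [i]) : Set (Equiv.Perm (Vert A))).Infinite) :
    (sectGrp (rist G (v ++ [i])) v : Set (Equiv.Perm (Vert A))).Infinite :=
  (hinf.image (sect_injOn_rist_append_singleton hG v i)).mono subset_closure

theorem relIndex_sectGrp_stabSet_zpowers_eq_zero {G : Subgroup (Equiv.Perm (Vert A))}
    (hG : G ≤ treeAut A) (hr : ∀ v : Vert A, (rist G v : Set (Equiv.Perm (Vert A))).Infinite)
    {i j : A} (hij : i ≠ j) {g : Equiv.Perm (Vert A)} (hg : g ∈ treeAut A) {X : Set (Vert A)}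
    {v : Vert A} (hv : v ∈ X) :
    (sectGrp (stabSet (zpowers g) X) v).relIndex (sectGrp (vstab G v) v) = 0 := by
  obtain ⟨z, hz⟩ := exists_sectGrp_stabSet_zpowers_eq hg hv
  rw [hz]
  exact relIndex_zpowers_eq_zero
    (infinite_sectGrp_rist_append_singleton hG (hr _))
    (infinite_sectGrp_rist_append_singleton hG (hr _))
    (sectGrp_mono (rist_append_singleton_le_vstab G v i) v)
    (sectGrp_mono (rist_append_singleton_le_vstab G v j) v)
    (le_bot_iff.mp ((inf_le_inf (sectGrp_rist_append_singleton_le hG v i)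
      (sectGrp_rist_append_singleton_le hG v j)).trans (rist_top_inf_eq_bot hij).le))

theorem IsTransversal.exists_prefix_mem {X : Set (Vert A)} (hX : IsTransversal A X) (a : A)
    {w : Vert A} (hw : ∀ u ∈ X, u.length ≤ w.length) : ∃ u ∈ X, u <+: w := by
  obtain ⟨n, hn, -⟩ := hX.2 fun i => w.getD i a
  have hnw : n ≤ w.length := by simpa using hw _ hn
  have htake : (List.ofFn fun i : Fin n => w.getD i a) = w.take n := by
    refine List.ext_getElem (by simp [hnw]) fun i h₁ _ => ?_
    simp only [List.length_ofFn] at h₁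
    simp [List.getElem?_eq_getElem (show i < w.length by omega)]
  exact ⟨_, hn, htake ▸ List.take_prefix n w⟩

theorem isOfFinOrder_of_sectGrp_stabSet_zpowers_eq_bot [Finite A] {g : Equiv.Perm (Vert A)}
    (hg : g ∈ treeAut A) {X : Set (Vert A)} (hX : IsTransversal A X) (a : A)
    (htriv : ∀ v ∈ X, sectGrp (stabSet (zpowers g) X) v = ⊥) : IsOfFinOrder g := by
  obtain ⟨N, hN⟩ := (hX.1.image List.length).bddAbove
  set S : Set (Vert A) := {w | w.length ≤ N}
  have hS : S.Finite := List.finite_length_le A N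
  have hXS : ∀ u ∈ X, u ∈ S := fun u hu => hN (Set.mem_image_of_mem _ hu)
  obtain ⟨k, hk, hkS⟩ := Equiv.Perm.exists_pos_pow_eqOn_of_finite (g := g) hS fun w => by
    simp only [S, Set.mem_ofPred_eq, hg.1 w]
  have hgk : g ^ k ∈ stabSet (zpowers g) X :=
    ⟨pow_mem (mem_zpowers g) k, fun u hu => hkS u (hXS u hu)⟩
  have hfix : ∀ w ∉ S, (g ^ k) w = w := fun w hw => by
    obtain ⟨u, hu, huw⟩ := hX.exists_prefix_mem a fun u hu =>
      (hXS u hu).trans (not_le.mp hw).le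
    have hsect : sect (g ^ k) u = 1 := mem_bot.mp (htriv u hu ▸ sect_mem_sectGrp hgk u)
    exact apply_eq_self_of_sect_eq_one ((treeAut A).pow_mem hg k) (hgk.2 u hu) hsect huw
  exact (Equiv.Perm.isOfFinOrder_of_forall_notMem_apply_eq_self hS hfix).of_pow hk.ne'

end Tree

/-- Lemma 3.4: a group with the subgroup induction property all of whose rigid
vertex stabilizers are infinite is torsion. -/
theorem statement4 {d : ℕ} (hd : 2 ≤ d) (G : Subgroup (Equiv.Perm (Vert (Fin d))))
    (hG : G ≤ treeAut (Fin d)) (hsip : HasSGIP G)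
    (hr : ∀ v : Vert (Fin d), (rist G v : Set (Equiv.Perm (Vert (Fin d)))).Infinite) :
    ∀ g ∈ G, IsOfFinOrder g := by
  intro g hg
  have : Nontrivial (Fin d) := Fin.nontrivial_iff_two_le.mpr hd
  obtain ⟨i, j, hij⟩ := exists_pair_ne (Fin d)
  obtain ⟨X, hX, hsect⟩ := hsip (zpowers g) (zpowers_le.mpr hg)
    ⟨{g}, by simp [zpowers_eq_closure]⟩
  refine isOfFinOrder_of_sectGrp_stabSet_zpowers_eq_bot (hG hg) hX i fun v hv =>
    (hsect v hv).resolve_right ?_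
  exact not_not.mpr (relIndex_sectGrp_stabSet_zpowers_eq_zero hG hr hij (hG hg) hv)
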